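/- Let c > 0. There exists a constant C₆ = C₆(c,α,d) > 0 such that for every bounded measurable function F : ℝ^d×ℝ^d → [0,∞), every t ∈ (0,1] and all x, y ∈ ℝ^d with |x−y| ≤ t^{1/2}, ∫₀^t ∫_{ℝ^d×ℝ^d} Γ_c(t−s; x−z)·η(s; w−y)·F(z,w)/|z−w|^{d+α} dz dw ds ≤ C₆·( Γ_c(t; x−y)·∫₀^t ∫_{ℝ^d×ℝ^d} η(s; w−y)·F(z,w)/|z−w|^{d+α} dz dw ds + η(t; x−y)·∫₀^t ∫_{ℝ^d×ℝ^d} Γ_c(s; x−z)·F(z,w)/|z−w|^{d+α} dz dw ds ). -/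

import Mathlib

open MeasureTheory Set ENNReal

noncomputable def Gam (d : ℕ) (lam t : ℝ) (x : EuclideanSpace ℝ (Fin d)) : ℝ :=
  t ^ (-(d : ℝ) / 2) * Real.exp (-lam * ‖x‖ ^ 2 / t)

noncomputable def eta (d : ℕ) (α t : ℝ) (x : EuclideanSpace ℝ (Fin d)) : ℝ :=
  t / (t ^ ((1 : ℝ) / 2) + ‖x‖) ^ ((d : ℝ) + α)

lemma Gam_nonneg {d : ℕ} {lam t : ℝ} (ht : 0 ≤ t) (x : EuclideanSpace ℝ (Fin d)) :
    0 ≤ Gam d lam t x :=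
  mul_nonneg (Real.rpow_nonneg ht _) (Real.exp_pos _).le

lemma eta_nonneg {d : ℕ} {α t : ℝ} (ht : 0 ≤ t) (x : EuclideanSpace ℝ (Fin d)) :
    0 ≤ eta d α t x :=
  div_nonneg ht (Real.rpow_nonneg (add_nonneg (Real.rpow_nonneg ht _) (norm_nonneg _)) _)

lemma sub_half_lintegral (t : ℝ) (g : ℝ → ℝ≥0∞) :
    ∫⁻ s in Set.Ioc (t/2) t, g s = ∫⁻ s in Set.Ioc 0 (t/2), g (t - s) := by
  have hmp : MeasurePreserving (fun s : ℝ => t - s) volume volume :=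
    Measure.measurePreserving_sub_left volume t
  have hemb : MeasurableEmbedding (fun s : ℝ => t - s) :=
    (MeasurableEquiv.subLeft t).measurableEmbedding
  have hpre : (fun s : ℝ => t - s) ⁻¹' Set.Ioc (t/2) t = Set.Ico 0 (t/2) := by
    ext s
    simp only [Set.mem_preimage, Set.mem_Ioc, Set.mem_Ico]
    constructor <;> rintro ⟨h1, h2⟩ <;> constructor <;> linarith
  rw [← hmp.setLIntegral_comp_preimage_emb hemb g (Set.Ioc (t/2) t), hpre,
    setLIntegral_congr Ico_ae_eq_Ioc]

lemma sq_half (t : ℝ) (ht : 0 < t) : (t ^ ((1:ℝ)/2)) ^ 2 = t := by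
  rw [← Real.rpow_natCast (t ^ ((1:ℝ)/2)) 2, ← Real.rpow_mul ht.le]
  norm_num

lemma gam_le {d : ℕ} {c t s : ℝ} (hc : 0 < c) (ht : 0 < t)
    (hs : s ∈ Set.Ioc 0 (t/2)) {x y : EuclideanSpace ℝ (Fin d)}
    (hxy : ‖x - y‖ ≤ t ^ ((1:ℝ)/2)) (z : EuclideanSpace ℝ (Fin d)) :
    Gam d c (t - s) (x - z) ≤ (2 ^ ((d:ℝ)/2) * Real.exp c) * Gam d c t (x - y) := by
  obtain ⟨hs0, hs2⟩ := hs
  have hts : t/2 ≤ t - s := by linarith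
  have hts0 : 0 < t - s := by linarith
  have h1 : Gam d c (t - s) (x - z) ≤ (t - s) ^ (-(d:ℝ)/2) := by
    unfold Gam
    apply mul_le_of_le_one_right (Real.rpow_nonneg hts0.le _)
    apply Real.exp_le_one_iff.mpr
    apply div_nonpos_of_nonpos_of_nonneg _ hts0.le
    have : 0 ≤ c * ‖x - z‖ ^ 2 := by positivity
    nlinarith
  have h2 : (t - s) ^ (-(d:ℝ)/2) ≤ (t/2) ^ (-(d:ℝ)/2) := by
    rw [show -(d:ℝ)/2 = -((d:ℝ)/2) by ring, Real.rpow_neg hts0.le, Real.rpow_neg (by positivity)]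
    exact inv_anti₀ (Real.rpow_pos_of_pos (by positivity) _)
      (Real.rpow_le_rpow (by positivity) hts (by positivity))
  have h3 : (t/2 : ℝ) ^ (-(d:ℝ)/2) = 2 ^ ((d:ℝ)/2) * t ^ (-(d:ℝ)/2) := by
    rw [Real.div_rpow ht.le (by norm_num),
      show (2:ℝ) ^ (-(d:ℝ)/2) = ((2:ℝ) ^ ((d:ℝ)/2))⁻¹ from by
        rw [← Real.rpow_neg (by norm_num)]; ring_nf]
    field_simp
  have h4 : t ^ (-(d:ℝ)/2) ≤ Real.exp c * Gam d c t (x - y) := by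
    unfold Gam
    have hxy2 : ‖x - y‖ ^ 2 ≤ t := by
      calc ‖x - y‖ ^ 2 ≤ (t ^ ((1:ℝ)/2)) ^ 2 := by
            apply pow_le_pow_left₀ (norm_nonneg _) hxy
        _ = t := sq_half t ht
    have hexp : Real.exp (-c) ≤ Real.exp (-c * ‖x - y‖ ^ 2 / t) := by
      apply Real.exp_le_exp.mpr
      have hle : ‖x - y‖ ^ 2 / t ≤ 1 := by rw [div_le_one ht]; exact hxy2
      have hge : (0:ℝ) ≤ ‖x - y‖ ^ 2 / t := by positivity
      rw [mul_div_assoc]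
      nlinarith
    calc t ^ (-(d:ℝ)/2) = Real.exp c * (t ^ (-(d:ℝ)/2) * Real.exp (-c)) := by
          rw [← mul_assoc, mul_comm (Real.exp c), mul_assoc, ← Real.exp_add]
          simp
      _ ≤ Real.exp c * (t ^ (-(d:ℝ)/2) * Real.exp (-c * ‖x - y‖ ^ 2 / t)) := by
          apply mul_le_mul_of_nonneg_left _ (Real.exp_pos _).le
          exact mul_le_mul_of_nonneg_left hexp (Real.rpow_nonneg ht.le _)
  calc Gam d c (t - s) (x - z) ≤ (t/2) ^ (-(d:ℝ)/2) := h1.trans h2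
    _ = 2 ^ ((d:ℝ)/2) * t ^ (-(d:ℝ)/2) := h3
    _ ≤ 2 ^ ((d:ℝ)/2) * (Real.exp c * Gam d c t (x - y)) := by
        apply mul_le_mul_of_nonneg_left h4 (by positivity)
    _ = (2 ^ ((d:ℝ)/2) * Real.exp c) * Gam d c t (x - y) := by ring

lemma eta_le {d : ℕ} {α t s : ℝ} (hd : 1 ≤ d) (hα1 : 0 < α) (ht : 0 < t)
    (hs : s ∈ Set.Ioc 0 (t/2)) {x y : EuclideanSpace ℝ (Fin d)}
    (hxy : ‖x - y‖ ≤ t ^ ((1:ℝ)/2)) (w : EuclideanSpace ℝ (Fin d)) :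
    eta d α (t - s) (w - y) ≤ 2 ^ (3*((d:ℝ)+α)/2) * eta d α t (x - y) := by
  obtain ⟨hs0, hs2⟩ := hs
  have hts : t/2 ≤ t - s := by linarith
  have hts0 : 0 < t - s := by linarith
  set β := (d:ℝ) + α with hβ
  have hβ0 : 0 < β := by
    have h1 : (1:ℝ) ≤ (d:ℝ) := by exact_mod_cast hd
    rw [hβ]; linarith
  have ht12 : (0:ℝ) < t ^ ((1:ℝ)/2) := Real.rpow_pos_of_pos ht _
  have hup : eta d α (t - s) (w - y) ≤ t / (t/2) ^ (β/2) := by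
    unfold eta
    apply div_le_div₀ ht.le (by linarith) (Real.rpow_pos_of_pos (by positivity) _)
    calc (t/2 : ℝ) ^ (β/2) = ((t/2) ^ ((1:ℝ)/2)) ^ β := by
          rw [← Real.rpow_mul (by positivity)]; ring_nf
      _ ≤ ((t - s) ^ ((1:ℝ)/2) + ‖w - y‖) ^ β := by
          apply Real.rpow_le_rpow (by positivity) _ hβ0.le
          have h' : (t/2 : ℝ) ^ ((1:ℝ)/2) ≤ (t - s) ^ ((1:ℝ)/2) :=
            Real.rpow_le_rpow (by positivity) hts (by norm_num)
          have := norm_nonneg (w - y)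
          linarith
  have hlow : t / (2 * t ^ ((1:ℝ)/2)) ^ β ≤ eta d α t (x - y) := by
    unfold eta
    apply div_le_div_of_nonneg_left ht.le (Real.rpow_pos_of_pos (by positivity) _)
    apply Real.rpow_le_rpow (by positivity) (by linarith) hβ0.le
  have hkey : t / (t/2) ^ (β/2) ≤ 2 ^ (3*β/2) * (t / (2 * t ^ ((1:ℝ)/2)) ^ β) := by
    apply le_of_eq
    have e1 : ((t/2:ℝ)) ^ (β/2) = t ^ (β/2) / 2 ^ (β/2) := Real.div_rpow ht.le (by norm_num) _
    have e2 : ((2:ℝ) * t ^ ((1:ℝ)/2)) ^ β = 2 ^ β * t ^ (β/2) := by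
      rw [Real.mul_rpow (by norm_num) (Real.rpow_nonneg ht.le _), ← Real.rpow_mul ht.le]
      ring_nf
    have e3 : (2:ℝ) ^ (3*β/2) = 2 ^ β * 2 ^ (β/2) := by
      rw [← Real.rpow_add (by norm_num)]; ring_nf
    rw [e1, e2, e3]
    have p1 : (0:ℝ) < t ^ (β/2) := Real.rpow_pos_of_pos ht _
    have p2 : (0:ℝ) < (2:ℝ) ^ (β/2) := Real.rpow_pos_of_pos (by norm_num) _
    have p3 : (0:ℝ) < (2:ℝ) ^ β := Real.rpow_pos_of_pos (by norm_num) _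
    field_simp
  calc eta d α (t - s) (w - y) ≤ t / (t/2) ^ (β/2) := hup
    _ ≤ 2 ^ (3*β/2) * (t / (2 * t ^ ((1:ℝ)/2)) ^ β) := hkey
    _ ≤ 2 ^ (3*β/2) * eta d α t (x - y) := by
        apply mul_le_mul_of_nonneg_left hlow (by positivity)

/-- generalized 3P inequality mixing Γ and η, case |x-y| ≤ √t. -/
theorem stmt11 (d : ℕ) (hd : 2 ≤ d) (α : ℝ) (hα1 : 0 < α) (hα2 : α < 2)
    (c : ℝ) (hc : 0 < c) :
    ∃ C₆ : ℝ, 0 < C₆ ∧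
      ∀ (F : EuclideanSpace ℝ (Fin d) → EuclideanSpace ℝ (Fin d) → ℝ),
        Measurable (Function.uncurry F) → (∀ z w, 0 ≤ F z w) →
        (∃ B : ℝ, ∀ z w, F z w ≤ B) →
        ∀ t ∈ Set.Ioc (0 : ℝ) 1, ∀ x y : EuclideanSpace ℝ (Fin d),
          ‖x - y‖ ≤ t ^ ((1 : ℝ) / 2) →
          (∫⁻ s in Set.Ioc (0 : ℝ) t,
              ∫⁻ zw : EuclideanSpace ℝ (Fin d) × EuclideanSpace ℝ (Fin d),
                ENNReal.ofReal (Gam d c (t - s) (x - zw.1) * eta d α s (zw.2 - y) *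
                  F zw.1 zw.2 / ‖zw.1 - zw.2‖ ^ ((d : ℝ) + α)))
            ≤ ENNReal.ofReal C₆ *
                (ENNReal.ofReal (Gam d c t (x - y)) *
                    (∫⁻ s in Set.Ioc (0 : ℝ) t,
                      ∫⁻ zw : EuclideanSpace ℝ (Fin d) × EuclideanSpace ℝ (Fin d),
                        ENNReal.ofReal (eta d α s (zw.2 - y) *
                          F zw.1 zw.2 / ‖zw.1 - zw.2‖ ^ ((d : ℝ) + α)))
                  + ENNReal.ofReal (eta d α t (x - y)) *
                    (∫⁻ s in Set.Ioc (0 : ℝ) t,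
                      ∫⁻ zw : EuclideanSpace ℝ (Fin d) × EuclideanSpace ℝ (Fin d),
                        ENNReal.ofReal (Gam d c s (x - zw.1) *
                          F zw.1 zw.2 / ‖zw.1 - zw.2‖ ^ ((d : ℝ) + α)))) := by
  have hC1 : (0:ℝ) < 2 ^ ((d:ℝ)/2) * Real.exp c := by positivity
  have hC2 : (0:ℝ) < 2 ^ (3*((d:ℝ)+α)/2) := by positivity
  refine ⟨2 ^ ((d:ℝ)/2) * Real.exp c + 2 ^ (3*((d:ℝ)+α)/2), by positivity, ?_⟩
  intro F hFm hF0 hFb t ht x y hxy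
  obtain ⟨ht0, ht1⟩ := ht
  -- Part 1 bound
  have hP1 : (∫⁻ s in Set.Ioc (0:ℝ) (t/2),
        ∫⁻ zw : EuclideanSpace ℝ (Fin d) × EuclideanSpace ℝ (Fin d),
          ENNReal.ofReal (Gam d c (t - s) (x - zw.1) * eta d α s (zw.2 - y) *
            F zw.1 zw.2 / ‖zw.1 - zw.2‖ ^ ((d : ℝ) + α)))
      ≤ ENNReal.ofReal (2 ^ ((d:ℝ)/2) * Real.exp c) *
          (ENNReal.ofReal (Gam d c t (x - y)) *
            (∫⁻ s in Set.Ioc (0 : ℝ) t,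
              ∫⁻ zw : EuclideanSpace ℝ (Fin d) × EuclideanSpace ℝ (Fin d),
                ENNReal.ofReal (eta d α s (zw.2 - y) *
                  F zw.1 zw.2 / ‖zw.1 - zw.2‖ ^ ((d : ℝ) + α)))) := by
    calc (∫⁻ s in Set.Ioc (0:ℝ) (t/2),
            ∫⁻ zw : EuclideanSpace ℝ (Fin d) × EuclideanSpace ℝ (Fin d),
              ENNReal.ofReal (Gam d c (t - s) (x - zw.1) * eta d α s (zw.2 - y) *
                F zw.1 zw.2 / ‖zw.1 - zw.2‖ ^ ((d : ℝ) + α)))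
        ≤ ∫⁻ s in Set.Ioc (0:ℝ) (t/2),
            ENNReal.ofReal ((2 ^ ((d:ℝ)/2) * Real.exp c) * Gam d c t (x - y)) *
              ∫⁻ zw : EuclideanSpace ℝ (Fin d) × EuclideanSpace ℝ (Fin d),
                ENNReal.ofReal (eta d α s (zw.2 - y) *
                  F zw.1 zw.2 / ‖zw.1 - zw.2‖ ^ ((d : ℝ) + α)) := by
          apply setLIntegral_mono' measurableSet_Ioc
          intro s hs
          rw [← lintegral_const_mul' _ _ ofReal_ne_top]
          apply lintegral_mono
          intro zw
          dsimp only
          rw [← ENNReal.ofReal_mul (mul_nonneg hC1.le (Gam_nonneg ht0.le _))]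
          apply ENNReal.ofReal_le_ofReal
          have heq : Gam d c (t - s) (x - zw.1) * eta d α s (zw.2 - y) *
              F zw.1 zw.2 / ‖zw.1 - zw.2‖ ^ ((d : ℝ) + α)
              = Gam d c (t - s) (x - zw.1) * (eta d α s (zw.2 - y) *
                F zw.1 zw.2 / ‖zw.1 - zw.2‖ ^ ((d : ℝ) + α)) := by ring
          rw [heq]
          apply mul_le_mul_of_nonneg_right (gam_le hc ht0 hs hxy zw.1)
          exact div_nonneg (mul_nonneg (eta_nonneg hs.1.le _) (hF0 zw.1 zw.2))
            (Real.rpow_nonneg (norm_nonneg _) _)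
      _ = ENNReal.ofReal ((2 ^ ((d:ℝ)/2) * Real.exp c) * Gam d c t (x - y)) *
            ∫⁻ s in Set.Ioc (0:ℝ) (t/2),
              ∫⁻ zw : EuclideanSpace ℝ (Fin d) × EuclideanSpace ℝ (Fin d),
                ENNReal.ofReal (eta d α s (zw.2 - y) *
                  F zw.1 zw.2 / ‖zw.1 - zw.2‖ ^ ((d : ℝ) + α)) :=
          lintegral_const_mul' _ _ ofReal_ne_top
      _ ≤ ENNReal.ofReal ((2 ^ ((d:ℝ)/2) * Real.exp c) * Gam d c t (x - y)) *
            ∫⁻ s in Set.Ioc (0:ℝ) t,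
              ∫⁻ zw : EuclideanSpace ℝ (Fin d) × EuclideanSpace ℝ (Fin d),
                ENNReal.ofReal (eta d α s (zw.2 - y) *
                  F zw.1 zw.2 / ‖zw.1 - zw.2‖ ^ ((d : ℝ) + α)) := by
          apply mul_le_mul_right
          exact lintegral_mono_set (Set.Ioc_subset_Ioc_right (by linarith))
      _ = ENNReal.ofReal (2 ^ ((d:ℝ)/2) * Real.exp c) *
            (ENNReal.ofReal (Gam d c t (x - y)) * _) := by
          rw [ENNReal.ofReal_mul hC1.le, mul_assoc]
  -- Part 2 bound
  have hP2 : (∫⁻ s in Set.Ioc (t/2) t,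
        ∫⁻ zw : EuclideanSpace ℝ (Fin d) × EuclideanSpace ℝ (Fin d),
          ENNReal.ofReal (Gam d c (t - s) (x - zw.1) * eta d α s (zw.2 - y) *
            F zw.1 zw.2 / ‖zw.1 - zw.2‖ ^ ((d : ℝ) + α)))
      ≤ ENNReal.ofReal (2 ^ (3*((d:ℝ)+α)/2)) *
          (ENNReal.ofReal (eta d α t (x - y)) *
            (∫⁻ s in Set.Ioc (0 : ℝ) t,
              ∫⁻ zw : EuclideanSpace ℝ (Fin d) × EuclideanSpace ℝ (Fin d),
                ENNReal.ofReal (Gam d c s (x - zw.1) *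
                  F zw.1 zw.2 / ‖zw.1 - zw.2‖ ^ ((d : ℝ) + α)))) := by
    rw [sub_half_lintegral t (fun s =>
        ∫⁻ zw : EuclideanSpace ℝ (Fin d) × EuclideanSpace ℝ (Fin d),
          ENNReal.ofReal (Gam d c (t - s) (x - zw.1) * eta d α s (zw.2 - y) *
            F zw.1 zw.2 / ‖zw.1 - zw.2‖ ^ ((d : ℝ) + α)))]
    simp only [_root_.sub_sub_cancel]
    calc (∫⁻ s in Set.Ioc (0:ℝ) (t/2),
            ∫⁻ zw : EuclideanSpace ℝ (Fin d) × EuclideanSpace ℝ (Fin d),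
              ENNReal.ofReal (Gam d c s (x - zw.1) * eta d α (t - s) (zw.2 - y) *
                F zw.1 zw.2 / ‖zw.1 - zw.2‖ ^ ((d : ℝ) + α)))
        ≤ ∫⁻ s in Set.Ioc (0:ℝ) (t/2),
            ENNReal.ofReal (2 ^ (3*((d:ℝ)+α)/2) * eta d α t (x - y)) *
              ∫⁻ zw : EuclideanSpace ℝ (Fin d) × EuclideanSpace ℝ (Fin d),
                ENNReal.ofReal (Gam d c s (x - zw.1) *
                  F zw.1 zw.2 / ‖zw.1 - zw.2‖ ^ ((d : ℝ) + α)) := by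
          apply setLIntegral_mono' measurableSet_Ioc
          intro s hs
          rw [← lintegral_const_mul' _ _ ofReal_ne_top]
          apply lintegral_mono
          intro zw
          dsimp only
          rw [← ENNReal.ofReal_mul (mul_nonneg hC2.le (eta_nonneg ht0.le _))]
          apply ENNReal.ofReal_le_ofReal
          have heq : Gam d c s (x - zw.1) * eta d α (t - s) (zw.2 - y) *
              F zw.1 zw.2 / ‖zw.1 - zw.2‖ ^ ((d : ℝ) + α)
              = eta d α (t - s) (zw.2 - y) * (Gam d c s (x - zw.1) *
                F zw.1 zw.2 / ‖zw.1 - zw.2‖ ^ ((d : ℝ) + α)) := by ring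
          rw [heq]
          apply mul_le_mul_of_nonneg_right (eta_le (by omega) hα1 ht0 hs hxy zw.2)
          exact div_nonneg (mul_nonneg (Gam_nonneg hs.1.le _) (hF0 zw.1 zw.2))
            (Real.rpow_nonneg (norm_nonneg _) _)
      _ = ENNReal.ofReal (2 ^ (3*((d:ℝ)+α)/2) * eta d α t (x - y)) *
            ∫⁻ s in Set.Ioc (0:ℝ) (t/2),
              ∫⁻ zw : EuclideanSpace ℝ (Fin d) × EuclideanSpace ℝ (Fin d),
                ENNReal.ofReal (Gam d c s (x - zw.1) *
                  F zw.1 zw.2 / ‖zw.1 - zw.2‖ ^ ((d : ℝ) + α)) :=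
          lintegral_const_mul' _ _ ofReal_ne_top
      _ ≤ ENNReal.ofReal (2 ^ (3*((d:ℝ)+α)/2) * eta d α t (x - y)) *
            ∫⁻ s in Set.Ioc (0:ℝ) t,
              ∫⁻ zw : EuclideanSpace ℝ (Fin d) × EuclideanSpace ℝ (Fin d),
                ENNReal.ofReal (Gam d c s (x - zw.1) *
                  F zw.1 zw.2 / ‖zw.1 - zw.2‖ ^ ((d : ℝ) + α)) := by
          apply mul_le_mul_right
          exact lintegral_mono_set (Set.Ioc_subset_Ioc_right (by linarith))
      _ = ENNReal.ofReal (2 ^ (3*((d:ℝ)+α)/2)) *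
            (ENNReal.ofReal (eta d α t (x - y)) * _) := by
          rw [ENNReal.ofReal_mul hC2.le, mul_assoc]
  -- assemble
  calc (∫⁻ s in Set.Ioc (0 : ℝ) t,
          ∫⁻ zw : EuclideanSpace ℝ (Fin d) × EuclideanSpace ℝ (Fin d),
            ENNReal.ofReal (Gam d c (t - s) (x - zw.1) * eta d α s (zw.2 - y) *
              F zw.1 zw.2 / ‖zw.1 - zw.2‖ ^ ((d : ℝ) + α)))
      = (∫⁻ s in Set.Ioc (0:ℝ) (t/2),
          ∫⁻ zw : EuclideanSpace ℝ (Fin d) × EuclideanSpace ℝ (Fin d),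
            ENNReal.ofReal (Gam d c (t - s) (x - zw.1) * eta d α s (zw.2 - y) *
              F zw.1 zw.2 / ‖zw.1 - zw.2‖ ^ ((d : ℝ) + α)))
        + (∫⁻ s in Set.Ioc (t/2) t,
          ∫⁻ zw : EuclideanSpace ℝ (Fin d) × EuclideanSpace ℝ (Fin d),
            ENNReal.ofReal (Gam d c (t - s) (x - zw.1) * eta d α s (zw.2 - y) *
              F zw.1 zw.2 / ‖zw.1 - zw.2‖ ^ ((d : ℝ) + α))) := by
        rw [← lintegral_union measurableSet_Ioc (Set.Ioc_disjoint_Ioc_of_le le_rfl),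
          Set.Ioc_union_Ioc_eq_Ioc (by linarith) (by linarith)]
    _ ≤ _ := by
        refine le_trans (add_le_add hP1 hP2) ?_
        refine le_trans (add_le_add
          (mul_le_mul_left (ENNReal.ofReal_le_ofReal (le_add_of_nonneg_right hC2.le)) _)
          (mul_le_mul_left (ENNReal.ofReal_le_ofReal (le_add_of_nonneg_left hC1.le)) _)) ?_
        exact le_of_eq (mul_add _ _ _).symm
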